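/- arXiv:1703.07896 — 4 statements merged into one kernel-verified Lean document; each statement's English description precedes it below -/
import Mathlib

section
/- Let X be a real Banach space whose norm satisfies the q-uniform convexity inequality ‖(x+y)/2‖^q ≤ (‖x‖^q + ‖y‖^q)/2 − ‖(x−y)/2‖^q for all x, y ∈ X, where q ≥ 2. Then for every n ∈ ℕ and all x₁,…,xₙ in the closed unit ball of X, there exist nonempty sets A, B ⊆ {1,…,n} with max A < min B such that ‖(1/|A|)∑_{i∈A} xᵢ − (1/|B|)∑_{j∈B} xⱼ‖ ≤ 2·2/(⌊log₂ n⌋)^{1/q} whenever n ≥ 2. -/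
/-!
Halve `[0, 2 ^ k)` repeatedly, keeping each time the half whose average has the larger norm.
By the Clarkson inequality, `‖average‖ ^ q` grows at each halving by at least `‖(u - v) / 2‖ ^ q`,
where `u` and `v` are the averages of the two halves. It starts at `≥ 0` and ends at
`‖x i‖ ^ q ≤ 1`, so one of the `k = ⌊log₂ n⌋` halvings has `‖(u - v) / 2‖ ^ q ≤ 1 / k`.
-/

open Finset

section

variable {X : Type*} [NormedAddCommGroup X] [NormedSpace ℝ X]

noncomputable def dyadicAvg (y : ℕ → X) (a m : ℕ) : X :=
  ((2 : ℝ) ^ m)⁻¹ • ∑ i ∈ Ico a (a + 2 ^ m), y i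

noncomputable def halvesGap (y : ℕ → X) (a m : ℕ) : ℝ :=
  ‖(1 / 2 : ℝ) • (dyadicAvg y a m - dyadicAvg y (a + 2 ^ m) m)‖

lemma dyadicAvg_zero (y : ℕ → X) (a : ℕ) : dyadicAvg y a 0 = y a := by
  simp [dyadicAvg]

lemma dyadicAvg_succ (y : ℕ → X) (a m : ℕ) :
    dyadicAvg y a (m + 1) = (1 / 2 : ℝ) • (dyadicAvg y a m + dyadicAvg y (a + 2 ^ m) m) := by
  have hsplit : ∑ i ∈ Ico a (a + 2 ^ (m + 1)), y i =
      ∑ i ∈ Ico a (a + 2 ^ m), y i + ∑ i ∈ Ico (a + 2 ^ m) (a + 2 ^ m + 2 ^ m), y i := by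
    rw [sum_Ico_consecutive _ (Nat.le_add_right a _) (Nat.le_add_right _ _), pow_succ, mul_two,
      add_assoc]
  rw [dyadicAvg, dyadicAvg, dyadicAvg, hsplit, pow_succ, mul_inv, smul_add, smul_add, smul_smul,
    smul_smul, mul_comm (1 / 2 : ℝ), one_div]

lemma rpow_norm_midpoint_add_le_max {q : ℝ}
    (hconv : ∀ x y : X,
      ‖(1 / 2 : ℝ) • (x + y)‖ ^ q ≤ (‖x‖ ^ q + ‖y‖ ^ q) / 2 - ‖(1 / 2 : ℝ) • (x - y)‖ ^ q)
    (u v : X) :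
    ‖(1 / 2 : ℝ) • (u + v)‖ ^ q + ‖(1 / 2 : ℝ) • (u - v)‖ ^ q ≤ max (‖u‖ ^ q) (‖v‖ ^ q) := by
  have := hconv u v
  have := le_max_left (‖u‖ ^ q) (‖v‖ ^ q)
  have := le_max_right (‖u‖ ^ q) (‖v‖ ^ q)
  linarith

lemma exists_half_rpow_norm_dyadicAvg_ge {q : ℝ}
    (hconv : ∀ x y : X,
      ‖(1 / 2 : ℝ) • (x + y)‖ ^ q ≤ (‖x‖ ^ q + ‖y‖ ^ q) / 2 - ‖(1 / 2 : ℝ) • (x - y)‖ ^ q)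
    (y : ℕ → X) (a m : ℕ) :
    ∃ b, (b = a ∨ b = a + 2 ^ m) ∧
      ‖dyadicAvg y a (m + 1)‖ ^ q + halvesGap y a m ^ q ≤ ‖dyadicAvg y b m‖ ^ q := by
  have h := rpow_norm_midpoint_add_le_max hconv (dyadicAvg y a m) (dyadicAvg y (a + 2 ^ m) m)
  rw [← dyadicAvg_succ] at h
  rcases max_choice (‖dyadicAvg y a m‖ ^ q) (‖dyadicAvg y (a + 2 ^ m) m‖ ^ q) with hmax | hmax
  · exact ⟨a, .inl rfl, hmax ▸ h⟩
  · exact ⟨a + 2 ^ m, .inr rfl, hmax ▸ h⟩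

lemma exists_halvesGap_rpow_le {q : ℝ} (hq : 0 ≤ q)
    (hconv : ∀ x y : X,
      ‖(1 / 2 : ℝ) • (x + y)‖ ^ q ≤ (‖x‖ ^ q + ‖y‖ ^ q) / 2 - ‖(1 / 2 : ℝ) • (x - y)‖ ^ q)
    {y : ℕ → X} (hy : ∀ i, ‖y i‖ ≤ 1) {m : ℕ} (hm : 1 ≤ m) (a : ℕ) :
    ∃ a' m', a ≤ a' ∧ a' + 2 ^ (m' + 1) ≤ a + 2 ^ m ∧
      ‖dyadicAvg y a m‖ ^ q + m * halvesGap y a' m' ^ q ≤ 1 := by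
  induction m, hm using Nat.le_induction generalizing a with
  | base =>
    obtain ⟨b, -, hb⟩ := exists_half_rpow_norm_dyadicAvg_ge hconv y a 0
    have hyb : ‖dyadicAvg y b 0‖ ^ q ≤ 1 := by
      rw [dyadicAvg_zero]
      exact Real.rpow_le_one (norm_nonneg _) (hy b) hq
    exact ⟨a, 0, le_rfl, le_rfl, by push_cast; linarith⟩
  | succ m _ ih =>
    obtain ⟨b, hb, hstep⟩ := exists_half_rpow_norm_dyadicAvg_ge hconv y a m
    obtain ⟨a', m', hba', hblock, hrest⟩ := ih b
    have hpow : 2 ^ (m + 1) = 2 ^ m + 2 ^ m := by ring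
    have hpos : 0 < 2 ^ m := by positivity
    have hgap : 0 ≤ halvesGap y a m ^ q := by unfold halvesGap; positivity
    have hgap' : 0 ≤ halvesGap y a' m' ^ q := by unfold halvesGap; positivity
    push_cast
    rcases le_total (halvesGap y a m ^ q) (halvesGap y a' m' ^ q) with hle | hle
    · refine ⟨a, m, le_rfl, le_rfl, ?_⟩
      nlinarith
    · refine ⟨a', m', ?_, ?_, ?_⟩
      · omega
      · omega
      · nlinarith

lemma norm_le_of_mul_rpow_norm_half_smul_le {q k : ℝ} (hq : 0 < q) (hk : 0 < k) {w : X}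
    (h : k * ‖(1 / 2 : ℝ) • w‖ ^ q ≤ 1) : ‖w‖ ≤ 2 / k ^ (1 / q) := by
  have hhalf : ‖(1 / 2 : ℝ) • w‖ ≤ (k⁻¹) ^ q⁻¹ := by
    rw [Real.le_rpow_inv_iff_of_pos (norm_nonneg _) (by positivity) hq, ← one_div,
      le_div_iff₀' hk]
    exact h
  rw [Real.inv_rpow hk.le, ← one_div, norm_smul] at hhalf
  norm_num at hhalf
  rw [div_eq_mul_inv, one_div]
  linarith

lemma inv_card_smul_sum_attachFin_eq_dyadicAvg (y : ℕ → X) {n a m : ℕ}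
    (h : ∀ i ∈ Ico a (a + 2 ^ m), i < n) :
    (#((Ico a (a + 2 ^ m)).attachFin h) : ℝ)⁻¹ • ∑ i ∈ (Ico a (a + 2 ^ m)).attachFin h, y i =
      dyadicAvg y a m := by
  rw [card_attachFin, Nat.card_Ico, Nat.add_sub_cancel_left, dyadicAvg, Nat.cast_pow,
    Nat.cast_ofNat]
  congr 1
  simpa using (sum_map ((Ico a (a + 2 ^ m)).attachFin h) Fin.valEmbedding y).symm

end

theorem stmt0_general
    (X : Type*) [NormedAddCommGroup X] [NormedSpace ℝ X]
    (q : ℝ) (hq : 2 ≤ q)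
    (hconv : ∀ x y : X,
      ‖(1 / 2 : ℝ) • (x + y)‖ ^ q ≤ (‖x‖ ^ q + ‖y‖ ^ q) / 2 - ‖(1 / 2 : ℝ) • (x - y)‖ ^ q)
    (n : ℕ) (hn : 2 ≤ n) (x : Fin n → X) (hx : ∀ i, ‖x i‖ ≤ 1) :
    ∃ A B : Finset (Fin n), A.Nonempty ∧ B.Nonempty ∧
      (∀ i ∈ A, ∀ j ∈ B, i < j) ∧
      ‖(A.card : ℝ)⁻¹ • ∑ i ∈ A, x i - (B.card : ℝ)⁻¹ • ∑ j ∈ B, x j‖ ≤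
        2 * 2 / ((Nat.log 2 n : ℝ) ^ (1 / q)) := by
  set k := Nat.log 2 n
  have hk : 1 ≤ k := Nat.log_pos one_lt_two hn
  have hkn : 2 ^ k ≤ n := Nat.pow_log_le_self 2 (by omega)
  set y : ℕ → X := fun i => if h : i < n then x ⟨i, h⟩ else 0
  have hy : ∀ i, ‖y i‖ ≤ 1 := fun i => by
    by_cases h : i < n <;> simp [y, h, hx]
  have hxy : ∀ i : Fin n, x i = y i := fun i => by simp [y]
  obtain ⟨a, m, -, hblock, hgap⟩ := exists_halvesGap_rpow_le (by linarith) hconv hy hk 0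
  have hpow : 2 ^ (m + 1) = 2 ^ m + 2 ^ m := by ring
  have hA : ∀ i ∈ Ico a (a + 2 ^ m), i < n := fun i hi => by rw [mem_Ico] at hi; omega
  have hB : ∀ i ∈ Ico (a + 2 ^ m) (a + 2 ^ m + 2 ^ m), i < n := fun i hi => by
    rw [mem_Ico] at hi; omega
  refine ⟨(Ico a (a + 2 ^ m)).attachFin hA, (Ico (a + 2 ^ m) (a + 2 ^ m + 2 ^ m)).attachFin hB,
    ⟨⟨a, hA a (by simp)⟩, by simp⟩, ⟨⟨a + 2 ^ m, hB _ (by simp)⟩, by simp⟩,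
    fun i hi j hj => ?_, ?_⟩
  · simp only [mem_attachFin, mem_Ico] at hi hj
    exact Fin.lt_def.2 (by omega)
  simp only [hxy, inv_card_smul_sum_attachFin_eq_dyadicAvg]
  have hgap' : (k : ℝ) * halvesGap y a m ^ q ≤ 1 := by
    have : 0 ≤ ‖dyadicAvg y 0 k‖ ^ q := by positivity
    linarith
  calc _ ≤ 2 / (k : ℝ) ^ (1 / q) :=
        norm_le_of_mul_rpow_norm_half_smul_le (by linarith) (by exact_mod_cast hk) hgap'
    _ ≤ 2 * 2 / (k : ℝ) ^ (1 / q) := by gcongr; norm_num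

/-- James-type condition for a norm satisfying a `q`-uniform convexity
(Clarkson-type) inequality with constant 1. -/
theorem stmt0
    (X : Type*) [NormedAddCommGroup X] [NormedSpace ℝ X] [CompleteSpace X]
    (q : ℝ) (hq : 2 ≤ q)
    (hconv : ∀ x y : X,
      ‖(1 / 2 : ℝ) • (x + y)‖ ^ q ≤ (‖x‖ ^ q + ‖y‖ ^ q) / 2 - ‖(1 / 2 : ℝ) • (x - y)‖ ^ q)
    (n : ℕ) (hn : 2 ≤ n) (x : Fin n → X) (hx : ∀ i, ‖x i‖ ≤ 1) :
    ∃ A B : Finset (Fin n), A.Nonempty ∧ B.Nonempty ∧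
      (∀ i ∈ A, ∀ j ∈ B, i < j) ∧
      ‖(A.card : ℝ)⁻¹ • ∑ i ∈ A, x i - (B.card : ℝ)⁻¹ • ∑ j ∈ B, x j‖ ≤
        2 * 2 / ((Nat.log 2 n : ℝ) ^ (1 / q)) :=
  stmt0_general X q hq hconv n hn x hx
end

section
/- Let X be a real Banach space with norm ‖·‖, q ≥ 2, C ≥ 1, and suppose there is an equivalent norm ⦀·⦀ on X with ‖x‖ ≤ ⦀x⦀ ≤ C‖x‖ for all x, satisfying ⦀(x+y)/2⦀^q ≤ (⦀x⦀^q + ⦀y⦀^q)/2 − ‖(x−y)/2‖^q for all x, y ∈ X. Then for every n ∈ ℕ with n ≥ 2 and all x₁,…,xₙ in the closed unit ball of (X, ‖·‖), there exist nonempty sets A, B ⊆ {1,…,n} with max A < min B such that ‖(1/|A|)∑_{i∈A} xᵢ − (1/|B|)∑_{j∈B} xⱼ‖ ≤ 2C/(⌊log₂ n⌋)^{1/q}. -/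
/-!
Let `z_m(i)` be the average of `x` over the dyadic block `[i 2^m, (i + 1) 2^m)`, so that
`z_{m+1}(i)` is the midpoint of `z_m(2i)` and `z_m(2i+1)`. By the `q`-uniform convexity of `T`,
passing from level `m` to level `m + 1` lowers the mean of `T(z)^q` over the blocks inside
`[0, 2^k)` by at least the mean of `‖(z_m(2i) - z_m(2i+1))/2‖^q` over adjacent pairs. These
drops telescope, so over the `k = ⌊log₂ n⌋` levels they add up to at most the mean at level `0`,
which is `≤ C^q`. Hence some level has mean drop `≤ C^q / k`, and at that level some adjacent
pair of block averages is at distance `≤ 2 C / k^{1/q}`.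
-/

open Finset
open scoped BigOperators

lemma sum_range_two_mul {M : Type*} [AddCommMonoid M] (f : ℕ → M) (N : ℕ) :
    ∑ i ∈ range (2 * N), f i = ∑ i ∈ range N, (f (2 * i) + f (2 * i + 1)) := by
  induction N with
  | zero => simp
  | succ N ih =>
    rw [Nat.mul_succ, sum_range_succ, sum_range_succ, sum_range_succ, ih, add_assoc]

lemma expect_range_two_mul (f : ℕ → ℝ) (N : ℕ) :
    𝔼 i ∈ range (2 * N), f i = 𝔼 i ∈ range N, (f (2 * i) + f (2 * i + 1)) / 2 := by
  rw [expect_eq_sum_div_card, expect_eq_sum_div_card, sum_range_two_mul, ← sum_div,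
    card_range, card_range, div_div, Nat.cast_mul, Nat.cast_two, mul_comm]

lemma sum_attachFin_eq_sum_dite {M : Type*} [AddCommMonoid M] {n : ℕ} (x : Fin n → M)
    (s : Finset ℕ) (h : ∀ j ∈ s, j < n) :
    ∑ j ∈ s.attachFin h, x j = ∑ j ∈ s, if hj : j < n then x ⟨j, hj⟩ else 0 := by
  conv_rhs => rw [← map_valEmbedding_attachFin h, sum_map]
  simp

lemma le_div_rpow_of_rpow_le {a b c q : ℝ} (ha : 0 ≤ a) (hb : 0 ≤ b) (hc : 0 ≤ c) (hq : 0 < q)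
    (h : a ^ q ≤ b ^ q / c) : a ≤ b / c ^ (1 / q) := by
  calc a = (a ^ q) ^ (1 / q) := by
        rw [← Real.rpow_mul ha, mul_one_div_cancel hq.ne', Real.rpow_one]
    _ ≤ (b ^ q / c) ^ (1 / q) := by gcongr
    _ = b / c ^ (1 / q) := by
      rw [Real.div_rpow (by positivity) hc, ← Real.rpow_mul hb, mul_one_div_cancel hq.ne',
        Real.rpow_one]

section Blocks

variable {X : Type*} [AddCommGroup X] [Module ℝ X]

noncomputable def blockAverage (x : ℕ → X) (m i : ℕ) : X :=
  ((2 : ℝ) ^ m)⁻¹ • ∑ j ∈ Ico (i * 2 ^ m) ((i + 1) * 2 ^ m), x j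

lemma blockAverage_zero (x : ℕ → X) (i : ℕ) : blockAverage x 0 i = x i := by
  simp [blockAverage]

lemma blockAverage_succ (x : ℕ → X) (m i : ℕ) :
    blockAverage x (m + 1) i =
      (1 / 2 : ℝ) • (blockAverage x m (2 * i) + blockAverage x m (2 * i + 1)) := by
  have hsplit : ∑ j ∈ Ico (i * 2 ^ (m + 1)) ((i + 1) * 2 ^ (m + 1)), x j =
      ∑ j ∈ Ico (2 * i * 2 ^ m) ((2 * i + 1) * 2 ^ m), x j +
        ∑ j ∈ Ico ((2 * i + 1) * 2 ^ m) ((2 * i + 1 + 1) * 2 ^ m), x j := by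
    rw [show i * 2 ^ (m + 1) = 2 * i * 2 ^ m by ring,
      show (i + 1) * 2 ^ (m + 1) = (2 * i + 1 + 1) * 2 ^ m by ring, sum_Ico_consecutive] <;>
      gcongr <;> omega
  rw [blockAverage, blockAverage, blockAverage, hsplit, pow_succ]
  module

lemma card_Ico_mul_add_one_mul (l a : ℕ) : #(Ico (l * a) ((l + 1) * a)) = a := by
  rw [Nat.card_Ico, add_one_mul, Nat.add_sub_cancel_left]

lemma average_attachFin_Ico_eq_blockAverage {n : ℕ} (x : Fin n → X) (m l : ℕ)
    (h : ∀ j ∈ Ico (l * 2 ^ m) ((l + 1) * 2 ^ m), j < n) :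
    (#((Ico (l * 2 ^ m) ((l + 1) * 2 ^ m)).attachFin h) : ℝ)⁻¹ •
        ∑ j ∈ (Ico (l * 2 ^ m) ((l + 1) * 2 ^ m)).attachFin h, x j =
      blockAverage (fun j => if hj : j < n then x ⟨j, hj⟩ else 0) m l := by
  rw [sum_attachFin_eq_sum_dite, card_attachFin, card_Ico_mul_add_one_mul, Nat.cast_pow,
    Nat.cast_two, blockAverage]

end Blocks

section Energy

variable {X : Type*} [NormedAddCommGroup X] [NormedSpace ℝ X] {T : X → ℝ} {q C : ℝ}

/-- Pisier's `q`-uniform convexity of `T` relative to the norm, in midpoint form. -/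
def UniformlyConvexWithPower (T : X → ℝ) (q : ℝ) : Prop :=
  ∀ y z : X, T ((1 / 2 : ℝ) • (y + z)) ^ q ≤ (T y ^ q + T z ^ q) / 2 - ‖(1 / 2 : ℝ) • (y - z)‖ ^ q

noncomputable def blockEnergy (T : X → ℝ) (q : ℝ) (x : ℕ → X) (m N : ℕ) : ℝ :=
  𝔼 i ∈ range N, T (blockAverage x m i) ^ q

noncomputable def blockGap (q : ℝ) (x : ℕ → X) (m N : ℕ) : ℝ :=
  𝔼 i ∈ range N, ‖(1 / 2 : ℝ) • (blockAverage x m (2 * i) - blockAverage x m (2 * i + 1))‖ ^ q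

lemma blockEnergy_succ_add_blockGap_le (hTconv : UniformlyConvexWithPower T q) (x : ℕ → X)
    (m N : ℕ) :
    blockEnergy T q x (m + 1) N + blockGap q x m N ≤ blockEnergy T q x m (2 * N) := by
  rw [blockEnergy, blockGap, ← expect_add_distrib, blockEnergy, expect_range_two_mul]
  refine expect_le_expect fun i _ => ?_
  rw [blockAverage_succ]
  linarith [hTconv (blockAverage x m (2 * i)) (blockAverage x m (2 * i + 1))]

lemma sum_blockGap_le_blockEnergy_zero (hTconv : UniformlyConvexWithPower T q)
    (hT : ∀ y, 0 ≤ T y) (x : ℕ → X) (k : ℕ) :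
    ∑ m ∈ range k, blockGap q x m (2 ^ (k - (m + 1))) ≤ blockEnergy T q x 0 (2 ^ k) := by
  set E : ℕ → ℝ := fun m => blockEnergy T q x m (2 ^ (k - m))
  have hstep : ∀ m ∈ range k, blockGap q x m (2 ^ (k - (m + 1))) ≤ E m - E (m + 1) := by
    intro m hm
    have h := blockEnergy_succ_add_blockGap_le hTconv x m (2 ^ (k - (m + 1)))
    rw [← pow_succ', show k - (m + 1) + 1 = k - m by grind] at h
    linarith
  calc ∑ m ∈ range k, blockGap q x m (2 ^ (k - (m + 1)))
      ≤ ∑ m ∈ range k, (E m - E (m + 1)) := sum_le_sum hstep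
    _ = E 0 - E k := sum_range_sub' E k
    _ ≤ E 0 := sub_le_self _ (expect_nonneg fun i _ => Real.rpow_nonneg (hT _) q)

lemma blockEnergy_zero_le (hT : ∀ y, 0 ≤ T y) (hq : 0 ≤ q) {x : ℕ → X} {N : ℕ} (hN : N ≠ 0)
    (hx : ∀ j < N, T (x j) ≤ C) : blockEnergy T q x 0 N ≤ C ^ q :=
  expect_le (nonempty_range_iff.mpr hN) fun j hj => by
    rw [blockAverage_zero]
    exact Real.rpow_le_rpow (hT _) (hx j (mem_range.mp hj)) hq

theorem exists_blockAverage_sub_le (hTconv : UniformlyConvexWithPower T q) (hT : ∀ y, 0 ≤ T y)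
    (hq : 0 < q) {x : ℕ → X} {k : ℕ} (hk : k ≠ 0) (hx : ∀ j < 2 ^ k, T (x j) ≤ C) :
    ∃ m i, (2 * i + 2) * 2 ^ m ≤ 2 ^ k ∧
      ‖blockAverage x m (2 * i) - blockAverage x m (2 * i + 1)‖ ≤ 2 * C / (k : ℝ) ^ (1 / q) := by
  have hC : 0 ≤ C := (hT _).trans (hx 0 (by positivity))
  have hsum : ∑ m ∈ range k, blockGap q x m (2 ^ (k - (m + 1))) ≤ C ^ q :=
    (sum_blockGap_le_blockEnergy_zero hTconv hT x k).trans
      (blockEnergy_zero_le hT hq.le (by positivity) hx)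
  obtain ⟨m, hm, hgap⟩ : ∃ m ∈ range k, blockGap q x m (2 ^ (k - (m + 1))) ≤ C ^ q / k :=
    exists_le_of_expect_le (nonempty_range_iff.mpr hk) <| by
      rw [expect_eq_sum_div_card, card_range]
      gcongr
  obtain ⟨i, hi, hgap⟩ := exists_le_of_expect_le (nonempty_range_iff.mpr (by positivity)) hgap
  refine ⟨m, i, ?_, ?_⟩
  · calc (2 * i + 2) * 2 ^ m = (i + 1) * 2 ^ (m + 1) := by ring
      _ ≤ 2 ^ (k - (m + 1)) * 2 ^ (m + 1) := by gcongr; exact mem_range.mp hi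
      _ = 2 ^ k := by rw [← pow_add, Nat.sub_add_cancel (mem_range.mp hm)]
  · rw [norm_smul, Real.norm_of_nonneg (by norm_num)] at hgap
    have := le_div_rpow_of_rpow_le (by positivity) hC (Nat.cast_nonneg k) hq hgap
    rw [mul_div_assoc]
    linarith

end Energy

theorem stmt1_general
    (X : Type*) [NormedAddCommGroup X] [NormedSpace ℝ X]
    (q : ℝ) (hq : 2 ≤ q) (C : ℝ) (hC : 1 ≤ C)
    (T : X → ℝ)
    (hT₁ : ∀ x : X, ‖x‖ ≤ T x ∧ T x ≤ C * ‖x‖)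
    (hTconv : ∀ x y : X,
      T ((1 / 2 : ℝ) • (x + y)) ^ q ≤ (T x ^ q + T y ^ q) / 2 - ‖(1 / 2 : ℝ) • (x - y)‖ ^ q)
    (n : ℕ) (hn : 2 ≤ n) (x : Fin n → X) (hx : ∀ i, ‖x i‖ ≤ 1) :
    ∃ A B : Finset (Fin n), A.Nonempty ∧ B.Nonempty ∧
      (∀ i ∈ A, ∀ j ∈ B, i < j) ∧
      ‖(A.card : ℝ)⁻¹ • ∑ i ∈ A, x i - (B.card : ℝ)⁻¹ • ∑ j ∈ B, x j‖ ≤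
        2 * C / ((Nat.log 2 n : ℝ) ^ (1 / q)) := by
  set k := Nat.log 2 n
  have hk : k ≠ 0 := (Nat.log_pos one_lt_two hn).ne'
  have hkn : 2 ^ k ≤ n := Nat.pow_log_le_self 2 (by omega)
  have hT : ∀ y, 0 ≤ T y := fun y => (norm_nonneg y).trans (hT₁ y).1
  have hTx : ∀ j < 2 ^ k, T (if hj : j < n then x ⟨j, hj⟩ else 0) ≤ C := fun j hj => by
    rw [dif_pos (hj.trans_le hkn)]
    exact (hT₁ _).2.trans (mul_le_of_le_one_right (by linarith) (hx _))
  obtain ⟨m, i, hfit, hle⟩ := exists_blockAverage_sub_le hTconv hT (by linarith) hk hTx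
  have hA : ∀ j ∈ Ico (2 * i * 2 ^ m) ((2 * i + 1) * 2 ^ m), j < n := fun j hj => by
    have := (mem_Ico.mp hj).2; nlinarith
  have hB : ∀ j ∈ Ico ((2 * i + 1) * 2 ^ m) ((2 * i + 1 + 1) * 2 ^ m), j < n := fun j hj => by
    have := (mem_Ico.mp hj).2; nlinarith
  refine ⟨attachFin _ hA, attachFin _ hB, card_pos.mp ?_, card_pos.mp ?_,
    fun a ha b hb => ?_, ?_⟩
  · rw [card_attachFin, card_Ico_mul_add_one_mul]; positivity
  · rw [card_attachFin, card_Ico_mul_add_one_mul]; positivity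
  · rw [mem_attachFin, mem_Ico] at ha hb
    omega
  · rwa [average_attachFin_Ico_eq_blockAverage, average_attachFin_Ico_eq_blockAverage]

/-- Lemma 3.1 of the paper: difference of averages in a space with an
equivalent `q`-convex norm `T` (Pisier's renorming). -/
theorem stmt1
    (X : Type*) [NormedAddCommGroup X] [NormedSpace ℝ X] [CompleteSpace X]
    (q : ℝ) (hq : 2 ≤ q) (C : ℝ) (hC : 1 ≤ C)
    (T : X → ℝ)
    (hT₁ : ∀ x : X, ‖x‖ ≤ T x ∧ T x ≤ C * ‖x‖)
    (hTconv : ∀ x y : X,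
      T ((1 / 2 : ℝ) • (x + y)) ^ q ≤ (T x ^ q + T y ^ q) / 2 - ‖(1 / 2 : ℝ) • (x - y)‖ ^ q)
    (n : ℕ) (hn : 2 ≤ n) (x : Fin n → X) (hx : ∀ i, ‖x i‖ ≤ 1) :
    ∃ A B : Finset (Fin n), A.Nonempty ∧ B.Nonempty ∧
      (∀ i ∈ A, ∀ j ∈ B, i < j) ∧
      ‖(A.card : ℝ)⁻¹ • ∑ i ∈ A, x i - (B.card : ℝ)⁻¹ • ∑ j ∈ B, x j‖ ≤
        2 * C / ((Nat.log 2 n : ℝ) ^ (1 / q)) :=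
  stmt1_general X q hq C hC T hT₁ hTconv n hn x hx
end

section
/- Let (M, d) be a metric space, f : M → ℝ uniformly continuous, and let ω : [0,∞) → [0,∞) be nondecreasing, continuous at 0 with ω(0) = 0, subadditive (ω(t+u) ≤ ω(t) + ω(u)), and satisfy |f(x) − f(y)| ≤ ω(d(x,y)) for all x, y ∈ M. Then for any ε, a > 0 with ω(a) ≤ ε there exists an (ε/a)-Lipschitz function g : M → ℝ with sup_{x ∈ M} |f(x) − g(x)| ≤ ε. -/
/-!
Subadditivity and monotonicity give `ω t ≤ ⌈t / a⌉ ω a ≤ (ω a / a) t + ω a`, so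
`f x - ε ≤ f y + (ε / a) d(x, y)` for all `x, y`. Under this one-sided bound the inf-convolution
`g x = inf_y (f y + (ε / a) d(x, y))` is finite; as an infimum of `(ε / a)`-Lipschitz functions
it is `(ε / a)`-Lipschitz, and taking `y = x` resp. using the bound gives `f - ε ≤ g ≤ f`.
-/

open Set NNReal

section Modulus

variable {ω : ℝ → ℝ}

theorem apply_nat_mul_le_of_subadditive (hω0 : ω 0 = 0)
    (hωsub : ∀ t u, 0 ≤ t → 0 ≤ u → ω (t + u) ≤ ω t + ω u) {a : ℝ} (ha : 0 ≤ a) (n : ℕ) :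
    ω (n * a) ≤ n * ω a := by
  induction n with
  | zero => simp [hω0]
  | succ n ih =>
    calc ω ((n + 1 : ℕ) * a) = ω (n * a + a) := by push_cast; ring_nf
      _ ≤ ω (n * a) + ω a := hωsub _ _ (by positivity) ha
      _ ≤ (n + 1 : ℕ) * ω a := by push_cast; linarith

theorem apply_le_div_mul_add_of_subadditive (hωmono : ∀ t u, 0 ≤ t → t ≤ u → ω t ≤ ω u)
    (hω0 : ω 0 = 0) (hωsub : ∀ t u, 0 ≤ t → 0 ≤ u → ω (t + u) ≤ ω t + ω u)
    {a t : ℝ} (ha : 0 < a) (ht : 0 ≤ t) :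
    ω t ≤ ω a / a * t + ω a := by
  have hωa : 0 ≤ ω a := hω0 ▸ hωmono 0 a le_rfl ha.le
  set n := ⌈t / a⌉₊
  have ht_le : t ≤ n * a := (div_le_iff₀ ha).1 (Nat.le_ceil _)
  have hn_le : (n : ℝ) ≤ t / a + 1 := (Nat.ceil_lt_add_one (by positivity)).le
  calc ω t ≤ ω (n * a) := hωmono _ _ ht ht_le
    _ ≤ n * ω a := apply_nat_mul_le_of_subadditive hω0 hωsub ha.le n
    _ ≤ (t / a + 1) * ω a := by gcongr
    _ = ω a / a * t + ω a := by field_simp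

end Modulus

section InfConvolution

variable {α : Type*} [PseudoMetricSpace α]

/-- The largest `K`-Lipschitz function below `f`, when one exists. -/
noncomputable def lipschitzInfConv (K : ℝ≥0) (f : α → ℝ) (x : α) : ℝ :=
  ⨅ y, f y + K * dist x y

variable {K : ℝ≥0} {f : α → ℝ} {C : ℝ}

theorem bddBelow_range_add_mul_dist (hC : ∀ x y, f x - C ≤ f y + K * dist x y) (x : α) :
    BddBelow (range fun y => f y + K * dist x y) :=
  ⟨f x - C, by rintro _ ⟨y, rfl⟩; exact hC x y⟩

theorem lipschitzInfConv_le_add_mul_dist (hC : ∀ x y, f x - C ≤ f y + K * dist x y) (x y : α) :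
    lipschitzInfConv K f x ≤ f y + K * dist x y :=
  ciInf_le (bddBelow_range_add_mul_dist hC x) y

theorem lipschitzInfConv_le (hC : ∀ x y, f x - C ≤ f y + K * dist x y) (x : α) :
    lipschitzInfConv K f x ≤ f x := by
  simpa using lipschitzInfConv_le_add_mul_dist hC x x

theorem sub_le_lipschitzInfConv (hC : ∀ x y, f x - C ≤ f y + K * dist x y) (x : α) :
    f x - C ≤ lipschitzInfConv K f x :=
  have : Nonempty α := ⟨x⟩
  le_ciInf (hC x)

theorem lipschitzWith_lipschitzInfConv (hC : ∀ x y, f x - C ≤ f y + K * dist x y) :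
    LipschitzWith K (lipschitzInfConv K f) := by
  refine LipschitzWith.of_le_add_mul K fun x x' => ?_
  have : Nonempty α := ⟨x⟩
  rw [← sub_le_iff_le_add]
  refine le_ciInf fun y => ?_
  calc lipschitzInfConv K f x - K * dist x x' ≤ f y + K * (dist x y - dist x x') := by
        linarith [lipschitzInfConv_le_add_mul_dist hC x y]
    _ ≤ f y + K * dist x' y := by
        gcongr
        linarith [dist_triangle x x' y]

end InfConvolution

theorem stmt6_general
    (M : Type*) [MetricSpace M] (f : M → ℝ)
    (ω : ℝ → ℝ)
    (hωmono : ∀ t u, 0 ≤ t → t ≤ u → ω t ≤ ω u)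
    (hω0 : ω 0 = 0)
    (hωsub : ∀ t u, 0 ≤ t → 0 ≤ u → ω (t + u) ≤ ω t + ω u)
    (hdom : ∀ x y : M, |f x - f y| ≤ ω (dist x y))
    (ε a : ℝ) (hε : 0 < ε) (ha : 0 < a) (hωa : ω a ≤ ε) :
    ∃ g : M → ℝ, LipschitzWith (Real.toNNReal (ε / a)) g ∧ ∀ x, |f x - g x| ≤ ε := by
  set K := Real.toNNReal (ε / a)
  have hK : (K : ℝ) = ε / a := Real.coe_toNNReal _ (by positivity)
  have hC : ∀ x y, f x - ε ≤ f y + K * dist x y := by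
    intro x y
    have hω := apply_le_div_mul_add_of_subadditive hωmono hω0 hωsub ha
      (dist_nonneg (x := x) (y := y))
    have hslope : ω a / a * dist x y ≤ K * dist x y := by rw [hK]; gcongr
    linarith [(abs_le.1 (hdom x y)).2]
  refine ⟨lipschitzInfConv K f, lipschitzWith_lipschitzInfConv hC, fun x => abs_le.2 ⟨?_, ?_⟩⟩
  · linarith [lipschitzInfConv_le hC x]
  · linarith [sub_le_lipschitzInfConv hC x]

/-- Lemma 2.3 of the paper: approximation of a uniformly continuous function
with subadditive modulus `ω` by an `(ε/a)`-Lipschitz function. -/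
theorem stmt6
    (M : Type*) [MetricSpace M] (f : M → ℝ) (hf : UniformContinuous f)
    (ω : ℝ → ℝ)
    (hωnonneg : ∀ t, 0 ≤ t → 0 ≤ ω t)
    (hωmono : ∀ t u, 0 ≤ t → t ≤ u → ω t ≤ ω u)
    (hω0 : ω 0 = 0)
    (hωcont : ContinuousWithinAt ω (Set.Ici 0) 0)
    (hωsub : ∀ t u, 0 ≤ t → 0 ≤ u → ω (t + u) ≤ ω t + ω u)
    (hdom : ∀ x y : M, |f x - f y| ≤ ω (dist x y))
    (ε a : ℝ) (hε : 0 < ε) (ha : 0 < a) (hωa : ω a ≤ ε) :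
    ∃ g : M → ℝ, LipschitzWith (Real.toNNReal (ε / a)) g ∧ ∀ x, |f x - g x| ≤ ε :=
  stmt6_general M f ω hωmono hω0 hωsub hdom ε a hε ha hωa
end

section
/- Let X be a Banach space. For every weakly Cauchy sequence (μₙ) in X and every sequence (ρₖ) ⊆ X* with ∑_k |⟨μ, ρₖ⟩| < ∞ for all μ ∈ X, we have lim_{k→∞} sup_n |⟨μₙ, ρₖ⟩| = 0. -/
open Filter Topology Set

/-- if `(μₙ)` is weakly Cauchy and `(ρₖ)` is weak*-WUC, then
`sup_n |⟨μₙ, ρₖ⟩| → 0` as `k → ∞`. -/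
theorem stmt10
    (X : Type*) [NormedAddCommGroup X] [NormedSpace ℝ X] [CompleteSpace X]
    (μ : ℕ → X)
    (hμ : ∀ φ : X →L[ℝ] ℝ, ∃ L : ℝ, Filter.Tendsto (fun n => φ (μ n)) Filter.atTop (nhds L))
    (ρ : ℕ → X →L[ℝ] ℝ) (hρ : ∀ ν : X, Summable fun k => |ρ k ν|) :
    ∀ ε : ℝ, 0 < ε → ∃ K : ℕ, ∀ k ≥ K, ∀ n : ℕ, |ρ k (μ n)| ≤ ε := by
  classical
  intro ε hε
  set e : Bool → ℝ := fun b => if b then (1:ℝ) else -1 with he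
  have habs : ∀ b : Bool, |e b| = 1 := by intro b; cases b <;> norm_num [he]
  have hsum : ∀ (σ : ℕ → Bool) (ν : X), Summable fun k => e (σ k) * ρ k ν := by
    intro σ ν
    apply Summable.of_norm_bounded (hρ ν)
    intro k
    rw [Real.norm_eq_abs, abs_mul, habs, one_mul]
  -- the signed functionals
  obtain ⟨Φ, hΦ⟩ : ∃ Φ : (ℕ → Bool) → (X →L[ℝ] ℝ),
      ∀ σ ν, Φ σ ν = ∑' k, e (σ k) * ρ k ν := by
    have htend : ∀ σ : ℕ → Bool,
        Tendsto (fun K => fun ν => (∑ k ∈ Finset.range K, e (σ k) • ρ k) ν) atTop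
          (𝓝 (fun ν => ∑' k, e (σ k) * ρ k ν)) := by
      intro σ
      rw [tendsto_pi_nhds]
      intro ν
      have h1 := (hsum σ ν).hasSum.tendsto_sum_nat
      simpa [ContinuousLinearMap.sum_apply, ContinuousLinearMap.smul_apply,
        smul_eq_mul] using h1
    exact ⟨fun σ => continuousLinearMapOfTendsto _ (htend σ), fun σ ν => rfl⟩
  -- continuity of `σ ↦ Φ σ ν`
  have hcont : ∀ ν : X, Continuous fun σ : ℕ → Bool => Φ σ ν := by
    intro ν
    simp only [hΦ]
    apply continuous_tsum (u := fun k => |ρ k ν|) _ (hρ ν)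
    · intro k σ
      rw [Real.norm_eq_abs, abs_mul, habs, one_mul]
    · intro k
      exact Continuous.comp (continuous_of_discreteTopology
        (f := fun b : Bool => e b * ρ k ν)) (continuous_apply k)
  -- the closed sets
  set F : ℕ → Set (ℕ → Bool) :=
    fun N => {σ | ∀ m ≥ N, ∀ n ≥ N, |Φ σ (μ m) - Φ σ (μ n)| ≤ ε/2} with hF
  have hFclosed : ∀ N, IsClosed (F N) := by
    intro N
    have : F N = ⋂ (m : ℕ) (_ : m ≥ N) (n : ℕ) (_ : n ≥ N),
        {σ : ℕ → Bool | |Φ σ (μ m) - Φ σ (μ n)| ≤ ε/2} := by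
      ext σ; simp [hF]
    rw [this]
    refine isClosed_iInter fun m => isClosed_iInter fun _ =>
      isClosed_iInter fun n => isClosed_iInter fun _ => ?_
    exact isClosed_le (((hcont (μ m)).sub (hcont (μ n))).abs) continuous_const
  have hFunion : ⋃ N, F N = univ := by
    rw [eq_univ_iff_forall]
    intro σ
    obtain ⟨L, hL⟩ := hμ (Φ σ)
    obtain ⟨N, hN⟩ := Metric.tendsto_atTop.1 hL (ε/4) (by linarith)
    refine mem_iUnion.2 ⟨N, fun m hm n hn => ?_⟩
    have h1 := hN m hm
    have h2 := hN n hn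
    rw [Real.dist_eq] at h1 h2
    calc |Φ σ (μ m) - Φ σ (μ n)|
        = |(Φ σ (μ m) - L) - (Φ σ (μ n) - L)| := by ring_nf
      _ ≤ |Φ σ (μ m) - L| + |Φ σ (μ n) - L| := abs_sub _ _
      _ ≤ ε/2 := by linarith
  -- Baire category
  obtain ⟨N, σ₀, hσ₀⟩ := nonempty_interior_of_iUnion_of_closed hFclosed hFunion
  obtain ⟨I, u, hu, hsub⟩ := isOpen_pi_iff.1 isOpen_interior σ₀ hσ₀
  have hpi : ∀ σ : ℕ → Bool, (∀ a ∈ I, σ a = σ₀ a) → σ ∈ F N := by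
    intro σ hσ
    refine interior_subset (hsub ?_)
    intro a ha
    rw [hσ a ha]
    exact (hu a ha).2
  set M : ℕ := I.sup id + 1 with hM
  have hMI : ∀ k ≥ M, k ∉ I := by
    intro k hk hkI
    have : k ≤ I.sup id := Finset.le_sup (f := id) hkI
    omega
  -- the flipping argument
  have hflip : ∀ k ≥ M, ∀ m ≥ N, ∀ n ≥ N, |ρ k (μ m) - ρ k (μ n)| ≤ ε/2 := by
    intro k hk m hm n hn
    set σ₁ : ℕ → Bool := Function.update σ₀ k true with hσ₁
    set σ₂ : ℕ → Bool := Function.update σ₀ k false with hσ₂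
    have hk' := hMI k hk
    have h1 : σ₁ ∈ F N := hpi σ₁ (by
      intro a ha; exact Function.update_of_ne (by rintro rfl; exact hk' ha) _ _)
    have h2 : σ₂ ∈ F N := hpi σ₂ (by
      intro a ha; exact Function.update_of_ne (by rintro rfl; exact hk' ha) _ _)
    have hdiff : ∀ ν : X, Φ σ₁ ν - Φ σ₂ ν = 2 * ρ k ν := by
      intro ν
      rw [hΦ, hΦ, ← Summable.tsum_sub (hsum σ₁ ν) (hsum σ₂ ν)]
      rw [tsum_eq_single k]
      · simp [hσ₁, hσ₂, Function.update_self, he]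
        ring
      · intro j hj
        have : σ₁ j = σ₂ j := by
          rw [hσ₁, hσ₂, Function.update_of_ne hj, Function.update_of_ne hj]
        rw [this]; ring
    have e1 := h1 m hm n hn
    have e2 := h2 m hm n hn
    have key : 2 * ρ k (μ m) - 2 * ρ k (μ n)
        = (Φ σ₁ (μ m) - Φ σ₁ (μ n)) - (Φ σ₂ (μ m) - Φ σ₂ (μ n)) := by
      have d1 := hdiff (μ m)
      have d2 := hdiff (μ n)
      linarith
    have : |2 * ρ k (μ m) - 2 * ρ k (μ n)| ≤ ε := by
      rw [key]
      calc |(Φ σ₁ (μ m) - Φ σ₁ (μ n)) - (Φ σ₂ (μ m) - Φ σ₂ (μ n))|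
          ≤ |Φ σ₁ (μ m) - Φ σ₁ (μ n)| + |Φ σ₂ (μ m) - Φ σ₂ (μ n)| := abs_sub _ _
        _ ≤ ε := by linarith
    have h2abs : |2 * ρ k (μ m) - 2 * ρ k (μ n)| = 2 * |ρ k (μ m) - ρ k (μ n)| := by
      rw [show 2 * ρ k (μ m) - 2 * ρ k (μ n) = 2 * (ρ k (μ m) - ρ k (μ n)) by ring,
        abs_mul]
      norm_num
    rw [h2abs] at this
    linarith
  -- the tails of finitely many series
  have htails : ∀ᶠ k in atTop, ∀ j ∈ Finset.range (N+1), |ρ k (μ j)| ≤ ε/2 := by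
    rw [Filter.eventually_all_finset]
    intro j _
    have h0 := (hρ (μ j)).tendsto_atTop_zero
    have := Metric.tendsto_atTop.1 h0 (ε/2) (by linarith)
    obtain ⟨K, hK⟩ := this
    rw [Filter.eventually_atTop]
    refine ⟨K, fun k hk => ?_⟩
    have := hK k hk
    rw [Real.dist_eq, sub_zero, abs_abs] at this
    linarith
  obtain ⟨K, hK⟩ := Filter.eventually_atTop.1 (htails.and (eventually_ge_atTop M))
  refine ⟨K, fun k hk n => ?_⟩
  obtain ⟨htail, hkM⟩ := hK k hk
  by_cases hn : n ≤ N
  · have := htail n (Finset.mem_range.2 (by omega))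
    linarith
  · have h1 : |ρ k (μ n) - ρ k (μ N)| ≤ ε/2 :=
      hflip k hkM n (by omega) N le_rfl
    have h2 : |ρ k (μ N)| ≤ ε/2 := htail N (Finset.mem_range.2 (by omega))
    calc |ρ k (μ n)| = |(ρ k (μ n) - ρ k (μ N)) + ρ k (μ N)| := by ring_nf
      _ ≤ |ρ k (μ n) - ρ k (μ N)| + |ρ k (μ N)| := abs_add_le _ _
      _ ≤ ε := by linarith
end
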